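/- arXiv:1005.1050 — 4 statements merged into one kernel-verified Lean document; each statement's English description precedes it below -/
import Mathlib

section
/- Let X be a real Banach space and let q : X → [0,+∞) be a continuous homogeneous polynomial of degree 2n satisfying ‖x‖^{2n} ≤ q(x) ≤ K‖x‖^{2n} for all x ∈ X, where K > 1. Then the function Q : X → [0,+∞) defined by Q(x) = (1 + q(x))^{1/(2n)} − 1 is real analytic, is Lipschitz on all of X, and satisfies inf{Q(x) : ‖x‖ ≥ 1} > 0 = Q(0). Moreover, for every r ≥ 1 and every x ∈ X, if Q(x) < 4r then ‖x‖ < 8r; in particular Q(x) ≥ ‖x‖/2 whenever ‖x‖ ≥ 8. -/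
open scoped NNReal

/-- A continuous homogeneous polynomial of degree `k` on `X`. -/
def IsHomogPoly {X : Type*} [NormedAddCommGroup X] [NormedSpace ℝ X] (k : ℕ) (q : X → ℝ) :
    Prop :=
  ∃ A : ContinuousMultilinearMap ℝ (fun _ : Fin k => X) ℝ, ∀ x : X, q x = A (fun _ => x)

/-!
From `‖x‖ ^ (2n) ≤ q x` we get `‖x‖ ≤ (1 + q x) ^ (1/(2n))`, i.e. `Q x ≥ ‖x‖ - 1`, which gives all
the growth bounds. Writing `q x = A (x, …, x)`, the derivative of `q` at `x` has norm at most
`2n ‖A‖ ‖x‖ ^ (2n-1) ≤ 2n ‖A‖ (1 + q x) ^ (1 - 1/(2n))`, and this power exactly cancels the factor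
`(1 + q x) ^ (1/(2n) - 1)` in the chain rule for `Q`: `‖DQ‖ ≤ ‖A‖` everywhere, so `Q` is
Lipschitz by the mean value inequality. Analyticity holds because `1 + q > 0` and `t ↦ t ^ (1/(2n))` is analytic
on `t > 0`.
-/

theorem AnalyticAt.rpow_const_of_pos {E : Type*} [NormedAddCommGroup E] [NormedSpace ℝ E]
    {f : E → ℝ} {x : E} (hf : AnalyticAt ℝ f x) (hfx : 0 < f x) (p : ℝ) :
    AnalyticAt ℝ (fun z => f z ^ p) x := by
  refine ((((analyticAt_log hfx).comp hf).mul (analyticAt_const (v := p))).rexp').congr ?_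
  filter_upwards [hf.continuousAt.eventually (eventually_gt_nhds hfx)] with z hz
  rw [Real.rpow_def_of_pos hz]
  rfl

namespace ContinuousMultilinearMap

variable {X F : Type*} [NormedAddCommGroup X] [NormedSpace ℝ X]
  [NormedAddCommGroup F] [NormedSpace ℝ F] {k : ℕ}

theorem norm_map_update_const_le (A : ContinuousMultilinearMap ℝ (fun _ : Fin k => X) F)
    (x y : X) (i : Fin k) :
    ‖A (Function.update (fun _ => x) i y)‖ ≤ ‖A‖ * (‖y‖ * ‖x‖ ^ (k - 1)) := by
  have hprod : ∏ j, ‖Function.update (fun _ : Fin k => x) i y j‖ = ‖y‖ * ‖x‖ ^ (k - 1) := by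
    simp only [Function.apply_update (fun _ v => ‖v‖) (fun _ => x) i y]
    rw [Finset.prod_update_of_mem (Finset.mem_univ i), Finset.prod_const,
      Finset.card_univ_sdiff, Finset.card_singleton, Fintype.card_fin]
  exact hprod ▸ A.le_opNorm _

theorem norm_linearDeriv_comp_diag_le (A : ContinuousMultilinearMap ℝ (fun _ : Fin k => X) F)
    (x : X) :
    ‖(A.linearDeriv fun _ => x).comp (.pi fun _ => .id ℝ X)‖ ≤ k * ‖A‖ * ‖x‖ ^ (k - 1) := by
  refine ContinuousLinearMap.opNorm_le_bound _ (by positivity) fun y => ?_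
  rw [ContinuousLinearMap.comp_apply, ContinuousMultilinearMap.linearDeriv_apply]
  calc ‖∑ i, A (Function.update (fun _ => x) i y)‖
      ≤ ∑ i : Fin k, ‖A‖ * (‖y‖ * ‖x‖ ^ (k - 1)) :=
        (norm_sum_le _ _).trans (Finset.sum_le_sum fun i _ => A.norm_map_update_const_le x y i)
    _ = k * ‖A‖ * ‖x‖ ^ (k - 1) * ‖y‖ := by
        simp only [Finset.sum_const, Finset.card_univ, Fintype.card_fin, nsmul_eq_mul]
        ring

end ContinuousMultilinearMap

namespace IsHomogPoly

variable {X : Type*} [NormedAddCommGroup X] [NormedSpace ℝ X] {k : ℕ} {q : X → ℝ}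

theorem analyticAt (hq : IsHomogPoly k q) (x : X) : AnalyticAt ℝ q x := by
  obtain ⟨A, hA⟩ := hq
  let diag : X →L[ℝ] (Fin k → X) := .pi fun _ => .id ℝ X
  rw [show q = A ∘ diag from funext hA]
  exact A.analyticAt.comp (diag.analyticAt x)

theorem map_zero (hq : IsHomogPoly k q) (hk : k ≠ 0) : q 0 = 0 := by
  obtain ⟨A, hA⟩ := hq
  have : Nonempty (Fin k) := ⟨⟨0, Nat.pos_of_ne_zero hk⟩⟩
  exact (hA 0).trans A.map_zero

theorem exists_hasFDerivAt_norm_le (hq : IsHomogPoly k q) :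
    ∃ (C : ℝ≥0) (q' : X → X →L[ℝ] ℝ), ∀ x, HasFDerivAt q (q' x) x ∧ ‖q' x‖ ≤ C * ‖x‖ ^ (k - 1) := by
  obtain ⟨A, hA⟩ := hq
  let diag : X →L[ℝ] (Fin k → X) := .pi fun _ => .id ℝ X
  refine ⟨k * ‖A‖₊, fun x => (A.linearDeriv fun _ => x).comp diag, fun x => ⟨?_, ?_⟩⟩
  · rw [funext hA]
    exact (A.hasFDerivAt _).comp x diag.hasFDerivAt
  · simpa using A.norm_linearDeriv_comp_diag_le x

end IsHomogPoly

section RootOfCoercive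

variable {X : Type*} [NormedAddCommGroup X] {k : ℕ} {q : X → ℝ}

theorem norm_le_one_add_rpow_inv (hk : k ≠ 0) (hql : ∀ x : X, ‖x‖ ^ k ≤ q x) (x : X) :
    ‖x‖ ≤ (1 + q x) ^ (1 / (k : ℝ)) := by
  calc ‖x‖ = (‖x‖ ^ k) ^ (1 / (k : ℝ)) := by
        rw [← Real.rpow_natCast, ← Real.rpow_mul (norm_nonneg x), mul_one_div_cancel (by simpa),
          Real.rpow_one]
    _ ≤ (1 + q x) ^ (1 / (k : ℝ)) := by
        gcongr
        linarith [hql x]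

theorem one_add_rpow_inv_sub_one_mul_norm_pow_le_one (hk : k ≠ 0)
    (hql : ∀ x : X, ‖x‖ ^ k ≤ q x) (x : X) :
    (1 + q x) ^ (1 / (k : ℝ) - 1) * ‖x‖ ^ (k - 1) ≤ 1 := by
  have hpos : 0 < 1 + q x := by linarith [hql x, pow_nonneg (norm_nonneg x) k]
  have hnorm : ‖x‖ ^ (k - 1) ≤ (1 + q x) ^ (1 - 1 / (k : ℝ)) := by
    calc ‖x‖ ^ (k - 1) ≤ ((1 + q x) ^ (1 / (k : ℝ))) ^ (k - 1) := by
          gcongr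
          exact norm_le_one_add_rpow_inv hk hql x
      _ = (1 + q x) ^ (1 - 1 / (k : ℝ)) := by
          rw [← Real.rpow_natCast, ← Real.rpow_mul hpos.le, Nat.cast_pred (Nat.pos_of_ne_zero hk)]
          congr 1
          field_simp
  calc (1 + q x) ^ (1 / (k : ℝ) - 1) * ‖x‖ ^ (k - 1)
      ≤ (1 + q x) ^ (1 / (k : ℝ) - 1) * (1 + q x) ^ (1 - 1 / (k : ℝ)) := by gcongr
    _ = 1 := by rw [← Real.rpow_add hpos]; simp

theorem lipschitzWith_one_add_rpow_inv [NormedSpace ℝ X] (hk : k ≠ 0) (hql : ∀ x : X, ‖x‖ ^ k ≤ q x)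
    {C : ℝ≥0} {q' : X → X →L[ℝ] ℝ}
    (hq' : ∀ x, HasFDerivAt q (q' x) x ∧ ‖q' x‖ ≤ C * ‖x‖ ^ (k - 1)) :
    LipschitzWith (C / k) fun x => (1 + q x) ^ (1 / (k : ℝ)) := by
  have hpos : ∀ x, 0 < 1 + q x := fun x => by linarith [hql x, pow_nonneg (norm_nonneg x) k]
  set p : ℝ := 1 / k
  have hp : 0 ≤ p := by positivity
  rw [← lipschitzOnWith_univ]
  refine Convex.lipschitzOnWith_of_nnnorm_hasFDerivWithin_le
    (fun x _ => (((hq' x).1.const_add 1).rpow_const (Or.inl (hpos x).ne')).hasFDerivWithinAt)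
    (fun x _ => ?_) convex_univ
  rw [← NNReal.coe_le_coe, coe_nnnorm, NNReal.coe_div, NNReal.coe_natCast]
  calc ‖(p * (1 + q x) ^ (p - 1)) • q' x‖
      = p * (1 + q x) ^ (p - 1) * ‖q' x‖ := by
        rw [norm_smul, Real.norm_of_nonneg (mul_nonneg hp (Real.rpow_nonneg (hpos x).le _))]
    _ ≤ p * (1 + q x) ^ (p - 1) * (C * ‖x‖ ^ (k - 1)) :=
        mul_le_mul_of_nonneg_left (hq' x).2 (mul_nonneg hp (Real.rpow_nonneg (hpos x).le _))
    _ = C / k * ((1 + q x) ^ (p - 1) * ‖x‖ ^ (k - 1)) := by ring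
    _ ≤ C / k :=
        mul_le_of_le_one_right (by positivity)
          (one_add_rpow_inv_sub_one_mul_norm_pow_le_one hk hql x)

end RootOfCoercive

theorem stmt6_general (X : Type*) [NormedAddCommGroup X] [NormedSpace ℝ X]
    (n : ℕ) (hn : 0 < n)
    (q : X → ℝ) (hq : IsHomogPoly (2 * n) q)
    (hql : ∀ x : X, ‖x‖ ^ (2 * n) ≤ q x)
    (Q : X → ℝ) (hQ : ∀ x : X, Q x = (1 + q x) ^ (1 / (2 * (n : ℝ))) - 1) :
    (∀ x, AnalyticAt ℝ Q x) ∧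
    (∃ L : ℝ≥0, LipschitzWith L Q) ∧
    (∃ c : ℝ, 0 < c ∧ ∀ x : X, 1 ≤ ‖x‖ → c ≤ Q x) ∧
    Q 0 = 0 ∧
    (∀ r : ℝ, 1 ≤ r → ∀ x : X, Q x < 4 * r → ‖x‖ < 8 * r) ∧
    (∀ x : X, 8 ≤ ‖x‖ → ‖x‖ / 2 ≤ Q x) := by
  have hk : 2 * n ≠ 0 := by omega
  obtain rfl : Q = fun x => (1 + q x) ^ (1 / ((2 * n : ℕ) : ℝ)) - 1 := by
    funext x
    rw [hQ]
    push_cast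
    rfl
  set p : ℝ := 1 / ((2 * n : ℕ) : ℝ)
  have hpos : ∀ x, 0 < 1 + q x := fun x => by linarith [hql x, pow_nonneg (norm_nonneg x) (2 * n)]
  have hnorm_le : ∀ x, ‖x‖ - 1 ≤ (1 + q x) ^ p - 1 := fun x => by
    linarith [norm_le_one_add_rpow_inv hk hql x]
  obtain ⟨C, q', hq'⟩ := hq.exists_hasFDerivAt_norm_le
  refine ⟨fun x => ((analyticAt_const.add (hq.analyticAt x)).rpow_const_of_pos (hpos x) p).sub
      analyticAt_const,
    ⟨_, (lipschitzWith_one_add_rpow_inv hk hql hq').sub (LipschitzWith.const 1)⟩,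
    ⟨2 ^ p - 1, ?_, fun x hx => ?_⟩, by simp [hq.map_zero hk],
    fun r hr x hx => by linarith [hnorm_le x], fun x hx => by linarith [hnorm_le x]⟩
  · have : (1 : ℝ) < 2 ^ p := Real.one_lt_rpow one_lt_two (by positivity)
    linarith
  · have : 1 ≤ q x := (one_le_pow₀ hx).trans (hql x)
    have : (2 : ℝ) ^ p ≤ (1 + q x) ^ p := by gcongr; linarith
    linarith

/-- Let `X` be a real Banach space and `q` a continuous homogeneous
polynomial of degree `2n` with `‖x‖^(2n) ≤ q x ≤ K‖x‖^(2n)` (`K > 1`). Then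
`Q x = (1 + q x)^(1/(2n)) - 1` is real analytic, Lipschitz on all of `X`, satisfies
`inf {Q x : ‖x‖ ≥ 1} > 0 = Q 0`, and for every `r ≥ 1`, `Q x < 4r → ‖x‖ < 8r`; in
particular `Q x ≥ ‖x‖/2` whenever `‖x‖ ≥ 8`. -/
theorem stmt6 (X : Type*) [NormedAddCommGroup X] [NormedSpace ℝ X]
    (n : ℕ) (hn : 0 < n) (K : ℝ) (hK : 1 < K)
    (q : X → ℝ) (hq : IsHomogPoly (2 * n) q)
    (hql : ∀ x : X, ‖x‖ ^ (2 * n) ≤ q x) (hqu : ∀ x : X, q x ≤ K * ‖x‖ ^ (2 * n))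
    (Q : X → ℝ) (hQ : ∀ x : X, Q x = (1 + q x) ^ (1 / (2 * (n : ℝ))) - 1) :
    (∀ x, AnalyticAt ℝ Q x) ∧
    (∃ L : ℝ≥0, LipschitzWith L Q) ∧
    (∃ c : ℝ, 0 < c ∧ ∀ x : X, 1 ≤ ‖x‖ → c ≤ Q x) ∧
    Q 0 = 0 ∧
    (∀ r : ℝ, 1 ≤ r → ∀ x : X, Q x < 4 * r → ‖x‖ < 8 * r) ∧
    (∀ x : X, 8 ≤ ‖x‖ → ‖x‖ / 2 ≤ Q x) :=
  stmt6_general X n hn q hq hql Q hQ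
end

section
/- Let X be a separable real Banach space, and let Q : X → [0,+∞) be a real analytic, Lipschitz function with inf{Q(x) : ‖x‖ ≥ 1} > 0 = Q(0) (as constructed from a separating polynomial). Let r > 0, ε ∈ (0,1), and let {x_j} be a sequence in X with X = ⋃_{j=1}^∞ D_Q(x_j, r). Then there exists a sequence of real analytic functions φ_n : X → ℝ, n ∈ ℕ, such that: (1) each φ_n is Lipschitz with Lip(φ_n) ≤ 2·Lip(Q)/r; (2) 0 ≤ φ_n(x) ≤ 1 + ε for all x ∈ X and all n; (3) for each x ∈ X there exists m ∈ ℕ with φ_m(x) > 1; (4) 0 ≤ φ_n(x) ≤ ε for all x ∈ X \ D_Q(x_n, 4r); and (4′) ‖φ_n′(x)‖ ≤ ε for all x ∈ X \ D_Q(x_n, 5r). -/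
/-!
Take `φ n x = g (Q (x - xs n))` for a single real-analytic profile `g : ℝ → ℝ` that is
`> 1` on `(-∞, r)`, `≤ ε` on `[4r, ∞)`, of slope at most `2 / r`, and almost flat on `[5r, ∞)`.
Such a `g` is a smoothing of a piecewise linear ramp: since `log (1 + e^x)` is within `e^{-|x|}`
of `max x 0`, a difference of two rescaled softplus functions approximates the ramp up to an
exponentially small error away from its corners, while its slope stays bounded by that of the
ramp. The bounds on `φ n` then follow from the chain rule and `‖Q'‖ ≤ Lip Q`.
-/

open scoped NNReal

/-- The least Lipschitz constant of a map. -/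
noncomputable def lipConst {α β : Type*} [PseudoEMetricSpace α] [PseudoEMetricSpace β]
    (f : α → β) : ℝ≥0 :=
  sInf {K : ℝ≥0 | LipschitzWith K f}

open Real Filter Topology

namespace Real

noncomputable def softplus (x : ℝ) : ℝ := log (1 + exp x)

lemma one_add_exp_pos (x : ℝ) : 0 < 1 + exp x := by positivity

lemma softplus_nonneg (x : ℝ) : 0 ≤ softplus x :=
  log_nonneg (by linarith [exp_pos x])

lemma softplus_monotone : Monotone softplus := fun _ _ h =>
  log_le_log (one_add_exp_pos _) (by gcongr)

lemma softplus_le_exp (x : ℝ) : softplus x ≤ exp x := by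
  have := log_le_sub_one_of_pos (one_add_exp_pos x)
  rw [softplus]
  linarith

lemma softplus_eq_add_softplus_neg (x : ℝ) : softplus x = x + softplus (-x) := by
  have h : 1 + exp x = exp x * (1 + exp (-x)) := by
    rw [mul_add, mul_one, ← exp_add, add_neg_cancel, exp_zero, add_comm]
  rw [softplus, softplus, h, log_mul (exp_ne_zero x) (one_add_exp_pos (-x)).ne', log_exp]

lemma softplus_sub_softplus_le {a b : ℝ} (h : a ≤ b) : softplus b - softplus a ≤ b - a := by
  have := softplus_monotone (neg_le_neg h)
  linarith [softplus_eq_add_softplus_neg a, softplus_eq_add_softplus_neg b]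

lemma sigmoid_le_exp (x : ℝ) : sigmoid x ≤ exp x := by
  rw [sigmoid_def, inv_le_iff_one_le_mul₀ (by positivity), mul_add, mul_one, ← exp_add,
    add_neg_cancel, exp_zero]
  linarith [exp_pos x]

lemma hasDerivAt_softplus (x : ℝ) : HasDerivAt softplus (sigmoid x) x := by
  have hsig : sigmoid x = exp x / (1 + exp x) := by
    rw [sigmoid_def, exp_neg]
    field_simp
    ring
  rw [hsig]
  exact ((hasDerivAt_exp x).const_add 1).log (one_add_exp_pos x).ne'

lemma analyticAt_softplus (x : ℝ) : AnalyticAt ℝ softplus x :=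
  (analyticAt_const.add analyticAt_rexp).log (one_add_exp_pos x)

end Real

/-- A real-analytic approximation, with error `s / β * e^{-β d}` at distance `d` from `[a, b]`, of
the function equal to `s * (b - a)` on `(-∞, a]`, to `0` on `[b, ∞)`, and linear of slope `-s`
in between. -/
noncomputable def smoothRamp (s β a b t : ℝ) : ℝ :=
  s / β * (softplus (β * (b - t)) - softplus (β * (a - t)))

section smoothRamp

variable {s β a b : ℝ}

lemma analyticAt_smoothRamp (t : ℝ) : AnalyticAt ℝ (smoothRamp s β a b) t := by
  have inner (c : ℝ) : AnalyticAt ℝ (fun u => softplus (β * (c - u))) t :=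
    (analyticAt_softplus _).comp (analyticAt_const.mul (analyticAt_const.sub analyticAt_id))
  exact analyticAt_const.mul ((inner b).sub (inner a))

lemma hasDerivAt_smoothRamp (hβ : β ≠ 0) (t : ℝ) :
    HasDerivAt (smoothRamp s β a b) (s * (sigmoid (β * (a - t)) - sigmoid (β * (b - t)))) t := by
  have inner (c : ℝ) : HasDerivAt (fun u => softplus (β * (c - u)))
      (sigmoid (β * (c - t)) * (β * -1)) t :=
    (hasDerivAt_softplus _).comp t (((hasDerivAt_id t).const_sub c).const_mul β)
  refine (((inner b).sub (inner a)).const_mul (s / β)).congr_deriv ?_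
  field_simp
  ring

lemma smoothRamp_nonneg (hs : 0 ≤ s) (hβ : 0 < β) (hab : a ≤ b) (t : ℝ) :
    0 ≤ smoothRamp s β a b t := by
  have : softplus (β * (a - t)) ≤ softplus (β * (b - t)) := softplus_monotone (by gcongr)
  exact mul_nonneg (by positivity) (by linarith)

lemma smoothRamp_le (hs : 0 ≤ s) (hβ : 0 < β) (hab : a ≤ b) (t : ℝ) :
    smoothRamp s β a b t ≤ s * (b - a) := by
  have : softplus (β * (b - t)) - softplus (β * (a - t)) ≤ β * (b - t) - β * (a - t) :=
    softplus_sub_softplus_le (by gcongr)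
  calc smoothRamp s β a b t ≤ s / β * (β * (b - t) - β * (a - t)) := by
        unfold smoothRamp; gcongr
    _ = s * (b - a) := by field_simp; ring

lemma sub_le_smoothRamp (hs : 0 ≤ s) (hβ : 0 < β) {d t : ℝ} (h : t + d ≤ a) :
    s * (b - a) - s / β * exp (-(β * d)) ≤ smoothRamp s β a b t := by
  have hb := softplus_eq_add_softplus_neg (β * (b - t))
  have ha := softplus_eq_add_softplus_neg (β * (a - t))
  have hb' := softplus_nonneg (-(β * (b - t)))
  have ha' : softplus (-(β * (a - t))) ≤ exp (-(β * d)) :=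
    (softplus_monotone (by nlinarith)).trans (softplus_le_exp _)
  calc s * (b - a) - s / β * exp (-(β * d))
      = s / β * (β * (b - t) - β * (a - t) - exp (-(β * d))) := by field_simp; ring
    _ ≤ smoothRamp s β a b t :=
      mul_le_mul_of_nonneg_left (by linarith) (by positivity)

lemma smoothRamp_le_of_add_le (hs : 0 ≤ s) (hβ : 0 < β) {d t : ℝ} (h : b + d ≤ t) :
    smoothRamp s β a b t ≤ s / β * exp (-(β * d)) := by
  have hb : softplus (β * (b - t)) ≤ exp (-(β * d)) :=
    (softplus_monotone (by nlinarith)).trans (softplus_le_exp _)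
  have ha := softplus_nonneg (β * (a - t))
  unfold smoothRamp
  gcongr
  linarith

lemma abs_deriv_smoothRamp_le_sigmoid (hs : 0 ≤ s) (hβ : 0 < β) (hab : a ≤ b) (t : ℝ) :
    |deriv (smoothRamp s β a b) t| ≤ s * sigmoid (β * (b - t)) := by
  have hσ : sigmoid (β * (a - t)) ≤ sigmoid (β * (b - t)) := sigmoid_le (by gcongr)
  rw [(hasDerivAt_smoothRamp hβ.ne' t).deriv, abs_mul, abs_of_nonneg hs,
    abs_of_nonpos (by linarith)]
  gcongr
  linarith [sigmoid_nonneg (β * (a - t))]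

lemma abs_deriv_smoothRamp_le (hs : 0 ≤ s) (hβ : 0 < β) (hab : a ≤ b) (t : ℝ) :
    |deriv (smoothRamp s β a b) t| ≤ s :=
  (abs_deriv_smoothRamp_le_sigmoid hs hβ hab t).trans
    (mul_le_of_le_one_right hs (sigmoid_le_one _))

lemma abs_deriv_smoothRamp_le_of_add_le (hs : 0 ≤ s) (hβ : 0 < β) (hab : a ≤ b) {d t : ℝ}
    (h : b + d ≤ t) :
    |deriv (smoothRamp s β a b) t| ≤ s * exp (-(β * d)) := by
  refine (abs_deriv_smoothRamp_le_sigmoid hs hβ hab t).trans ?_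
  gcongr
  exact (sigmoid_le_exp _).trans (exp_le_exp.2 (by nlinarith))

lemma lipschitzWith_smoothRamp (hs : 0 ≤ s) (hβ : 0 < β) (hab : a ≤ b) :
    LipschitzWith s.toNNReal (smoothRamp s β a b) := by
  refine lipschitzWith_of_nnnorm_deriv_le
    (fun t => (hasDerivAt_smoothRamp hβ.ne' t).differentiableAt) fun t => ?_
  rw [← NNReal.coe_le_coe, coe_nnnorm, Real.norm_eq_abs, Real.coe_toNNReal _ hs]
  exact abs_deriv_smoothRamp_le hs hβ hab t

end smoothRamp

/-- `g` is a smoothed ramp of height `1 + ε/2` on `[3r/2, 7r/2]`, which leaves a margin `r/2` on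
either side before the points `r` and `4r` where its values are prescribed. -/
theorem exists_analytic_profile {r ε η : ℝ} (hr : 0 < r) (hε : 0 < ε) (hη : 0 < η) :
    ∃ g : ℝ → ℝ, (∀ t, AnalyticAt ℝ g t) ∧
      LipschitzWith ((1 + ε / 2) / (2 * r)).toNNReal g ∧
      (∀ t, 0 ≤ g t ∧ g t ≤ 1 + ε) ∧ (∀ t < r, 1 < g t) ∧ (∀ t, 4 * r ≤ t → g t ≤ ε) ∧
      (∀ t, 5 * r ≤ t → |deriv g t| ≤ η) := by
  set s := (1 + ε / 2) / (2 * r)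
  have hs : 0 ≤ s := by positivity
  have hab : 3 * r / 2 ≤ 7 * r / 2 := by linarith
  have hheight : s * (7 * r / 2 - 3 * r / 2) = 1 + ε / 2 := by simp only [s]; field_simp; ring
  have hsmall : Tendsto (fun β => s * exp (-(β * (r / 2)))) atTop (𝓝 0) := by
    simpa using (tendsto_exp_neg_atTop_nhds_zero.comp
      (tendsto_id.atTop_mul_const (by positivity : 0 < r / 2))).const_mul s
  obtain ⟨β, hβ1, hβ⟩ := ((eventually_ge_atTop 1).and
    (hsmall.eventually (gt_mem_nhds (lt_min (half_pos hε) hη)))).exists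
  have hβ0 : 0 < β := by linarith
  have htail : s / β * exp (-(β * (r / 2))) < ε / 2 := by
    calc s / β * exp (-(β * (r / 2))) ≤ s * exp (-(β * (r / 2))) := by
          gcongr; exact div_le_self hs hβ1
      _ < ε / 2 := hβ.trans_le (min_le_left _ _)
  refine ⟨smoothRamp s β (3 * r / 2) (7 * r / 2), analyticAt_smoothRamp,
    lipschitzWith_smoothRamp hs hβ0 hab, fun t => ?_, fun t ht => ?_, fun t ht => ?_,
    fun t ht => ?_⟩
  · exact ⟨smoothRamp_nonneg hs hβ0 hab t, by linarith [smoothRamp_le hs hβ0 hab t]⟩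
  · have hmargin : t + r / 2 ≤ 3 * r / 2 := by linarith
    linarith [sub_le_smoothRamp (b := 7 * r / 2) hs hβ0 hmargin]
  · have hmargin : 7 * r / 2 + r / 2 ≤ t := by linarith
    linarith [smoothRamp_le_of_add_le (a := 3 * r / 2) hs hβ0 hmargin]
  · exact (abs_deriv_smoothRamp_le_of_add_le (d := r / 2) hs hβ0 hab (by linarith)).trans
      (hβ.le.trans (min_le_right _ _))

section lipConst

variable {α β : Type*} [PseudoMetricSpace α] [PseudoMetricSpace β]

lemma lipConst_le {f : α → β} {K : ℝ≥0} (hf : LipschitzWith K f) : lipConst f ≤ K :=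
  csInf_le (OrderBot.bddBelow _) hf

/-- False in pseudo-emetric spaces: a map that is `K`-Lipschitz for every `K > 0` may still
separate points at infinite distance. -/
lemma lipschitzWith_lipConst {f : α → β} (hf : ∃ K, LipschitzWith K f) :
    LipschitzWith (lipConst f) f := by
  refine LipschitzWith.of_dist_le_mul fun x y => ?_
  obtain ⟨K, hK⟩ := hf
  rcases (dist_nonneg : 0 ≤ dist x y).eq_or_lt with hxy | hxy
  · simpa [← hxy] using hK.dist_le_mul x y
  rw [← div_le_iff₀ hxy, lipConst, NNReal.coe_sInf]
  refine le_csInf ⟨K, K, hK, rfl⟩ ?_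
  rintro _ ⟨K', hK', rfl⟩
  exact (div_le_iff₀ hxy).2 (hK'.dist_le_mul x y)

end lipConst

lemma LipschitzWith.comp_sub_const {E β : Type*} [SeminormedAddCommGroup E] [PseudoMetricSpace β]
    {f : E → β} {K : ℝ≥0} (hf : LipschitzWith K f) (a : E) :
    LipschitzWith K (fun x => f (x - a)) :=
  LipschitzWith.of_dist_le_mul fun x y => by
    simpa only [dist_sub_right] using hf.dist_le_mul (x - a) (y - a)

lemma norm_fderiv_comp_le {E : Type*} [NormedAddCommGroup E] [NormedSpace ℝ E] {g : ℝ → ℝ}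
    {f : E → ℝ} {K : ℝ≥0} {x : E} (hg : DifferentiableAt ℝ g (f x))
    (hf : DifferentiableAt ℝ f x) (hK : LipschitzWith K f) :
    ‖fderiv ℝ (g ∘ f) x‖ ≤ |deriv g (f x)| * K := by
  rw [(hg.hasDerivAt.comp_hasFDerivAt x hf.hasFDerivAt).fderiv, norm_smul, Real.norm_eq_abs]
  gcongr
  exact norm_fderiv_le_of_lipschitz ℝ hK

theorem stmt9_general (X : Type*) [NormedAddCommGroup X] [NormedSpace ℝ X]
    (Q : X → ℝ) (hQan : ∀ x, AnalyticAt ℝ Q x)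
    (hQlip : ∃ K : ℝ≥0, LipschitzWith K Q)
    (r : ℝ) (hr : 0 < r) (ε : ℝ) (hε : ε ∈ Set.Ioo (0 : ℝ) 1)
    (xs : ℕ → X) (hcover : ∀ y : X, ∃ j : ℕ, Q (y - xs j) < r) :
    ∃ φ : ℕ → X → ℝ,
      (∀ n, ∀ x, AnalyticAt ℝ (φ n) x) ∧
      (∀ n, (∃ K : ℝ≥0, LipschitzWith K (φ n)) ∧
        (lipConst (φ n) : ℝ) ≤ 2 * (lipConst Q : ℝ) / r) ∧
      (∀ n x, 0 ≤ φ n x ∧ φ n x ≤ 1 + ε) ∧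
      (∀ x : X, ∃ m : ℕ, 1 < φ m x) ∧
      (∀ n, ∀ x : X, ¬ Q (x - xs n) < 4 * r → φ n x ≤ ε) ∧
      (∀ n, ∀ x : X, ¬ Q (x - xs n) < 5 * r → ‖fderiv ℝ (φ n) x‖ ≤ ε) := by
  obtain ⟨hε0, hε1⟩ := hε
  obtain ⟨K, hK⟩ := hQlip
  obtain ⟨g, hg_an, hg_lip, hg_bds, hg_gt, hg_tail, hg_deriv⟩ :=
    exists_analytic_profile hr hε0 (η := ε / (K + 1)) (by positivity)
  set f : ℕ → X → ℝ := fun n x => Q (x - xs n)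
  have hf_an (n : ℕ) (x : X) : AnalyticAt ℝ (f n) x :=
    (hQan _).comp (analyticAt_id.sub analyticAt_const)
  have hslope : (1 + ε / 2) / (2 * r) ≤ 2 / r := by
    rw [div_le_div_iff₀ (by positivity) hr]; nlinarith
  refine ⟨fun n => g ∘ f n, fun n x => (hg_an _).comp (hf_an n x), fun n => ⟨?_, ?_⟩,
    fun n x => hg_bds _, fun x => ?_, fun n x hx => hg_tail _ (not_lt.1 hx),
    fun n x hx => ?_⟩
  · exact ⟨_, hg_lip.comp (hK.comp_sub_const (xs n))⟩
  · have hle := NNReal.coe_le_coe.2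
      (lipConst_le (hg_lip.comp ((lipschitzWith_lipConst ⟨K, hK⟩).comp_sub_const (xs n))))
    rw [NNReal.coe_mul, Real.coe_toNNReal _ (by positivity)] at hle
    calc (lipConst (g ∘ f n) : ℝ) ≤ (1 + ε / 2) / (2 * r) * lipConst Q := hle
      _ ≤ 2 / r * lipConst Q := by gcongr
      _ = 2 * lipConst Q / r := by ring
  · obtain ⟨j, hj⟩ := hcover x
    exact ⟨j, hg_gt _ hj⟩
  · calc ‖fderiv ℝ (g ∘ f n) x‖ ≤ |deriv g (f n x)| * K :=
          norm_fderiv_comp_le (hg_an _).differentiableAt (hf_an n x).differentiableAt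
            (hK.comp_sub_const (xs n))
      _ ≤ ε / (K + 1) * K := by gcongr; exact hg_deriv _ (by linarith [not_lt.1 hx])
      _ ≤ ε := by
          rw [div_mul_eq_mul_div, div_le_iff₀ (by positivity)]; nlinarith

/-- Let `X` be a separable real Banach space and `Q : X → [0,∞)` a real
analytic, Lipschitz function with `inf {Q x : ‖x‖ ≥ 1} > 0 = Q 0`. Let `r > 0`,
`ε ∈ (0,1)` and let `{x_j}` be a sequence with `X = ⋃_j D_Q(x_j, r)`, where
`D_Q(x, r) = {y : Q (y - x) < r}`. Then there are real analytic functions `φ_n : X → ℝ`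
with: (1) `Lip(φ_n) ≤ 2 Lip(Q) / r`; (2) `0 ≤ φ_n ≤ 1 + ε`; (3) for each `x` some
`φ_m x > 1`; (4) `φ_n ≤ ε` off `D_Q(x_n, 4r)`; (4′) `‖φ_n′‖ ≤ ε` off `D_Q(x_n, 5r)`. -/
theorem stmt9 (X : Type*) [NormedAddCommGroup X] [NormedSpace ℝ X] [CompleteSpace X]
    [TopologicalSpace.SeparableSpace X]
    (Q : X → ℝ) (hQnonneg : ∀ x, 0 ≤ Q x) (hQan : ∀ x, AnalyticAt ℝ Q x)
    (hQlip : ∃ K : ℝ≥0, LipschitzWith K Q)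
    (hQsep : ∃ c : ℝ, 0 < c ∧ ∀ x : X, 1 ≤ ‖x‖ → c ≤ Q x) (hQ0 : Q 0 = 0)
    (r : ℝ) (hr : 0 < r) (ε : ℝ) (hε : ε ∈ Set.Ioo (0 : ℝ) 1)
    (xs : ℕ → X) (hcover : ∀ y : X, ∃ j : ℕ, Q (y - xs j) < r) :
    ∃ φ : ℕ → X → ℝ,
      (∀ n, ∀ x, AnalyticAt ℝ (φ n) x) ∧
      (∀ n, (∃ K : ℝ≥0, LipschitzWith K (φ n)) ∧
        (lipConst (φ n) : ℝ) ≤ 2 * (lipConst Q : ℝ) / r) ∧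
      (∀ n x, 0 ≤ φ n x ∧ φ n x ≤ 1 + ε) ∧
      (∀ x : X, ∃ m : ℕ, 1 < φ m x) ∧
      (∀ n, ∀ x : X, ¬ Q (x - xs n) < 4 * r → φ n x ≤ ε) ∧
      (∀ n, ∀ x : X, ¬ Q (x - xs n) < 5 * r → ‖fderiv ℝ (φ n) x‖ ≤ ε) :=
  stmt9_general X Q hQan hQlip r hr ε hε xs hcover
end

section
/- The path β : [0,+∞) → ℓ∞ defined by β(t) = Σ_{j=1}^{n−1} e_j + (t − n + 1)e_n for n − 1 ≤ t ≤ n, n ∈ ℕ, is an injective 1-Lipschitz map whose inverse β⁻¹ : β([0,+∞)) → [0,+∞) is uniformly continuous but not Lipschitz. -/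
open scoped NNReal ENNReal

/-- `ℓ∞`: bounded real sequences with the sup norm. -/
abbrev Linf : Type := lp (fun _ : ℕ => ℝ) ∞

/-- The path `β : [0,∞) → ℓ∞`, `β(t) = Σ_{j=1}^{n-1} e_j + (t-n+1) eₙ` for
`n-1 ≤ t ≤ n` (here indexed from `0`: `β t j = max 0 (min 1 (t - j))`). -/
noncomputable def beta (t : ℝ) : Linf :=
  ⟨fun j : ℕ => max 0 (min 1 (t - j)), by
    apply memℓp_infty
    refine ⟨1, ?_⟩
    rintro s ⟨j, rfl⟩
    have h1 : max 0 (min 1 (t - (j : ℝ))) ≤ 1 := max_le zero_le_one (min_le_left _ _)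
    have h2 : (0 : ℝ) ≤ max 0 (min 1 (t - (j : ℝ))) := le_max_left _ _
    simp only [Real.norm_eq_abs, abs_le]
    exact ⟨by linarith, h1⟩⟩

lemma beta_apply (t : ℝ) (j : ℕ) : (beta t : ℕ → ℝ) j = max 0 (min 1 (t - j)) := rfl

lemma beta_sub_apply (s t : ℝ) (j : ℕ) :
    ((beta t - beta s : Linf) : ℕ → ℝ) j = max 0 (min 1 (t - j)) - max 0 (min 1 (s - j)) := by
  rw [lp.coeFn_sub, Pi.sub_apply, beta_apply, beta_apply]

lemma norm_beta_sub_le (s t : ℝ) (h : s ≤ t) : ‖beta t - beta s‖ ≤ t - s := by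
  apply lp.norm_le_of_forall_le (by linarith)
  intro j
  rw [beta_sub_apply, Real.norm_eq_abs, abs_le]
  constructor <;>
  · rcases le_total (1:ℝ) (t - j) with h1 | h1 <;> rcases le_total (1:ℝ) (s - j) with h2 | h2 <;>
      rcases le_total (0:ℝ) (t - j) with h3 | h3 <;> rcases le_total (0:ℝ) (s - j) with h4 | h4 <;>
      simp [min_def, max_def] <;> split_ifs <;> linarith

lemma norm_beta_sub_le_one (s t : ℝ) : ‖beta t - beta s‖ ≤ 1 := by
  apply lp.norm_le_of_forall_le zero_le_one
  intro j
  rw [beta_sub_apply, Real.norm_eq_abs, abs_le]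
  have h1 : max 0 (min 1 (t - (j:ℝ))) ≤ 1 := max_le zero_le_one (min_le_left _ _)
  have h2 : (0:ℝ) ≤ max 0 (min 1 (t - (j:ℝ))) := le_max_left _ _
  have h3 : max 0 (min 1 (s - (j:ℝ))) ≤ 1 := max_le zero_le_one (min_le_left _ _)
  have h4 : (0:ℝ) ≤ max 0 (min 1 (s - (j:ℝ))) := le_max_left _ _
  constructor <;> linarith

lemma key (s t : ℝ) (hs : 0 ≤ s) (hst : s ≤ t) :
    min 1 (t - s) ≤ 2 * ‖beta t - beta s‖ := by
  set n : ℕ := ⌊s⌋.toNat with hn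
  have hz : (⌊s⌋.toNat : ℤ) = ⌊s⌋ := Int.toNat_of_nonneg (Int.floor_nonneg.2 hs)
  have hcast : (n : ℝ) = (⌊s⌋ : ℝ) := by rw [hn]; exact_mod_cast hz
  have hns : (n : ℝ) ≤ s := by rw [hcast]; exact Int.floor_le s
  have hns1 : s < n + 1 := by rw [hcast]; exact Int.lt_floor_add_one s
  have hc := norm_nonneg (beta t - beta s)
  set c := ‖beta t - beta s‖ with hcdef
  have hA : max 0 (min 1 (t - n)) - max 0 (min 1 (s - n)) ≤ c := by
    have h := lp.norm_apply_le_norm (E := fun _ : ℕ => ℝ) ENNReal.top_ne_zero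
      (beta t - beta s) n
    rw [Real.norm_eq_abs, beta_sub_apply] at h
    exact le_trans (le_abs_self _) h
  have hB : max 0 (min 1 (t - (n+1:ℕ))) - max 0 (min 1 (s - (n+1:ℕ))) ≤ c := by
    have h := lp.norm_apply_le_norm (E := fun _ : ℕ => ℝ) ENNReal.top_ne_zero
      (beta t - beta s) (n+1)
    rw [Real.norm_eq_abs, beta_sub_apply] at h
    exact le_trans (le_abs_self _) h
  push_cast at hB
  have e1 : max 0 (min 1 (s - n)) = s - n := by
    rw [min_eq_right (by linarith), max_eq_right (by linarith)]
  have e2 : max 0 (min 1 (s - (n+1))) = 0 := by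
    rw [max_eq_left]; exact min_le_of_right_le (by linarith)
  rw [e1] at hA
  rw [e2, sub_zero] at hB
  rcases le_total (t - (n:ℝ)) 1 with h1 | h1
  · rw [min_eq_right h1, max_eq_right (by linarith)] at hA
    have : min 1 (t - s) ≤ t - s := min_le_right _ _
    linarith
  · rw [min_eq_left h1, max_eq_right (by linarith)] at hA
    rcases le_total (1:ℝ) (t - (n+1)) with h2 | h2
    · rw [min_eq_left h2, max_eq_right (by linarith)] at hB
      have : min 1 (t - s) ≤ 1 := min_le_left _ _
      linarith
    · rw [min_eq_right h2] at hB
      have hB' : t - (n+1) ≤ c := le_trans (le_max_right _ _) hB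
      have : min 1 (t - s) ≤ t - s := min_le_right _ _
      linarith

/-- The path `β : [0,∞) → ℓ∞` is an injective `1`-Lipschitz map whose
inverse `β⁻¹ : β([0,∞)) → [0,∞)` is uniformly continuous but not Lipschitz. -/
theorem stmt17 :
    Set.InjOn beta (Set.Ici (0 : ℝ)) ∧
    LipschitzOnWith 1 beta (Set.Ici (0 : ℝ)) ∧
    ∀ h : Linf → ℝ, (∀ t : ℝ, 0 ≤ t → h (beta t) = t) →
      UniformContinuousOn h (beta '' Set.Ici (0 : ℝ)) ∧
      ¬ ∃ K : ℝ≥0, LipschitzOnWith K h (beta '' Set.Ici (0 : ℝ)) := by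
  have inj : Set.InjOn beta (Set.Ici (0 : ℝ)) := by
    intro s hs t ht hst
    rcases lt_trichotomy s t with hlt | heq | hlt
    · exfalso
      have hk := key s t hs hlt.le
      rw [hst, sub_self, norm_zero, mul_zero] at hk
      have h2 : (0:ℝ) < min 1 (t - s) := lt_min one_pos (by linarith)
      linarith
    · exact heq
    · exfalso
      have hk := key t s ht hlt.le
      rw [← hst, sub_self, norm_zero, mul_zero] at hk
      have h2 : (0:ℝ) < min 1 (s - t) := lt_min one_pos (by linarith)
      linarith
  refine ⟨inj, ?_, ?_⟩
  · rw [lipschitzOnWith_iff_dist_le_mul]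
    intro x _ y _
    rw [NNReal.coe_one, one_mul, dist_eq_norm, Real.dist_eq]
    rcases le_total y x with h | h
    · calc ‖beta x - beta y‖ ≤ x - y := norm_beta_sub_le y x h
        _ ≤ |x - y| := le_abs_self _
    · calc ‖beta x - beta y‖ = ‖beta y - beta x‖ := norm_sub_rev _ _
        _ ≤ y - x := norm_beta_sub_le x y h
        _ ≤ |x - y| := by rw [abs_sub_comm]; exact le_abs_self _
  · intro h hh
    constructor
    · rw [Metric.uniformContinuousOn_iff]
      intro ε hε
      refine ⟨min 1 ε / 2, by positivity, ?_⟩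
      have main : ∀ s t : ℝ, 0 ≤ s → s ≤ t → ‖beta t - beta s‖ < min 1 ε / 2 →
          t - s < ε := by
        intro s t hs hle hd
        have hk := key s t hs hle
        by_contra hcon
        push_neg at hcon
        have : min 1 ε ≤ min 1 (t - s) := min_le_min le_rfl hcon
        linarith
      rintro x ⟨t, ht, rfl⟩ y ⟨s, hs, rfl⟩ hd
      rw [hh t ht, hh s hs, Real.dist_eq]
      rw [dist_eq_norm] at hd
      rcases le_total s t with hle | hle
      · rw [abs_of_nonneg (by linarith)]
        exact main s t hs hle hd
      · rw [abs_of_nonpos (by linarith)]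
        have : s - t < ε := main t s ht hle (by rwa [norm_sub_rev])
        linarith
    · rintro ⟨K, hK⟩
      have h1 : beta ((K:ℝ) + 1) ∈ beta '' Set.Ici (0:ℝ) :=
        ⟨(K:ℝ) + 1, Set.mem_Ici.2 (by positivity), rfl⟩
      have h0 : beta 0 ∈ beta '' Set.Ici (0:ℝ) := ⟨0, Set.mem_Ici.2 le_rfl, rfl⟩
      have := hK.dist_le_mul _ h1 _ h0
      rw [hh _ (by positivity), hh 0 le_rfl, Real.dist_eq, sub_zero,
        abs_of_nonneg (by positivity), dist_eq_norm] at this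
      have h2 : ‖beta ((K:ℝ) + 1) - beta 0‖ ≤ 1 := norm_beta_sub_le_one _ _
      have h3 : (K:ℝ) * ‖beta ((K:ℝ) + 1) - beta 0‖ ≤ K * 1 :=
        mul_le_mul_of_nonneg_left h2 K.coe_nonneg
      linarith
end

section
/- Every real Banach space X with a separating polynomial admits a Lipschitz, real analytic separating function; that is, there exists a function Q : X → [0,∞) which is Lipschitz on all of X, real analytic, and satisfies Q(0) = 0 and Q(x) ≥ m‖x‖ whenever ‖x‖ ≥ M, for some constants M, m > 0. -/
/-!
Write the separating polynomial as `P = ∑ k, P k` with `P k x = A k (x, …, x)` homogeneous of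
degree `k ≥ 1` (the constant term is `P 0 = 0`). With `d = 2 ∏ k` and `e k = d / k`, the function
`q = ∑ k, (P k) ^ (e k)` is an analytic `d`-homogeneous polynomial that is `≥ 0`, since every `e k`
is even, and `≥ δ > 0` on the unit sphere, since there some `P k` is bounded below by a fixed
positive constant. Hence `δ ‖x‖ ^ d ≤ q x ≤ C ‖x‖ ^ d`, and the multilinear difference estimate
gives `|q x - q y| ≤ L max ‖x‖ ‖y‖ ^ (d - 1) ‖x - y‖`.

Then `Q = (1 + q) ^ (1 / d) - 1` is analytic, vanishes at `0` and grows like `‖x‖`. It is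
Lipschitz: when `‖x‖ ≤ 2 ‖x - y‖` the growth bound suffices; otherwise `‖y‖` is comparable to
`‖x‖`, and the tangent-line bound for the concave `t ↦ t ^ (1 / d)` at `1 + q y ≥ δ ‖y‖ ^ d`
turns the degree `d - 1` estimate on `q x - q y` into a bound in which all powers of `‖y‖` cancel.
-/

open scoped NNReal

/-- A continuous polynomial: a finite sum of continuous homogeneous polynomials. -/
def IsContPoly {X : Type*} [NormedAddCommGroup X] [NormedSpace ℝ X] (P : X → ℝ) : Prop :=
  ∃ (n : ℕ) (A : (k : Fin (n + 1)) → ContinuousMultilinearMap ℝ (fun _ : Fin (k : ℕ) => X) ℝ),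
    ∀ x : X, P x = ∑ k : Fin (n + 1), A k (fun _ => x)

/-- `X` admits a separating polynomial. -/
def HasSeparatingPoly (X : Type*) [NormedAddCommGroup X] [NormedSpace ℝ X] : Prop :=
  ∃ P : X → ℝ, IsContPoly P ∧ P 0 = 0 ∧ ∃ c : ℝ, 0 < c ∧ ∀ x : X, ‖x‖ = 1 → c ≤ P x

theorem rpow_sub_rpow_le_of_le_one {x y p : ℝ} (hx : 0 ≤ x) (hy : 0 < y) (hp0 : 0 ≤ p)
    (hp1 : p ≤ 1) : x ^ p - y ^ p ≤ p * y ^ (p - 1) * (x - y) := by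
  have hs : -1 ≤ x / y - 1 := by linarith [div_nonneg hx hy.le]
  have h := rpow_one_add_le_one_add_mul_self hs hp0 hp1
  rw [add_sub_cancel, Real.div_rpow hx hy.le, div_le_iff₀ (by positivity)] at h
  rw [Real.rpow_sub_one hy.ne']
  calc x ^ p - y ^ p ≤ (1 + p * (x / y - 1)) * y ^ p - y ^ p := by gcongr
    _ = p * (y ^ p / y) * (x - y) := by field_simp; ring

theorem pow_rpow_inv_natCast_sub_one_mul_pow {s : ℝ} {d : ℕ} (hs : 0 < s) (hd : d ≠ 0) :
    (s ^ d) ^ ((d : ℝ)⁻¹ - 1) * s ^ (d - 1) = 1 := by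
  rw [Real.rpow_sub_one (by positivity), Real.pow_rpow_inv_natCast hs.le hd, div_mul_eq_mul_div,
    ← pow_succ', Nat.sub_add_cancel (Nat.one_le_iff_ne_zero.2 hd), div_self (by positivity)]

theorem mul_pow_rpow_inv_natCast {c t : ℝ} {d : ℕ} (hc : 0 ≤ c) (ht : 0 ≤ t) (hd : d ≠ 0) :
    (c * t ^ d) ^ (d : ℝ)⁻¹ = c ^ (d : ℝ)⁻¹ * t := by
  rw [Real.mul_rpow hc (by positivity), Real.pow_rpow_inv_natCast ht hd]

theorem min_div_card_add_one_pow_le_sum_pow {ι : Type*} [Fintype ι] {a : ι → ℝ} {e : ι → ℕ}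
    {c : ℝ} {d : ℕ} (hc : 0 < c) (ha : c ≤ ∑ i, a i) (he : ∀ i, Even (e i))
    (hed : ∀ i, e i ≤ d) : min (c / (Fintype.card ι + 1)) 1 ^ d ≤ ∑ i, a i ^ e i := by
  -- the `+ 1` makes `card ι • (c / (card ι + 1)) < c` hold also for empty `ι`
  obtain ⟨i, -, hi⟩ : ∃ i ∈ Finset.univ, c / (Fintype.card ι + 1) < a i := by
    refine Finset.exists_lt_of_sum_lt (ha.trans_lt' ?_)
    rw [Finset.sum_const, Finset.card_univ, nsmul_eq_mul, mul_div_assoc',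
      div_lt_iff₀ (by positivity)]
    linarith
  calc min (c / (Fintype.card ι + 1)) 1 ^ d
      ≤ min (c / (Fintype.card ι + 1)) 1 ^ e i :=
        pow_le_pow_of_le_one (by positivity) (min_le_right _ _) (hed i)
    _ ≤ a i ^ e i := pow_le_pow_left₀ (by positivity) ((min_le_left _ _).trans hi.le) _
    _ ≤ ∑ j, a j ^ e j :=
        Finset.single_le_sum (fun j _ => (he j).pow_nonneg _) (Finset.mem_univ i)

theorem AnalyticAt.rpow_const {E : Type*} [NormedAddCommGroup E] [NormedSpace ℝ E] {f : E → ℝ}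
    {x : E} (hf : AnalyticAt ℝ f x) (hx : 0 < f x) (p : ℝ) :
    AnalyticAt ℝ (fun z => f z ^ p) x := by
  refine (((analyticAt_log hx).comp hf).mul (analyticAt_const (v := p))).rexp'.congr ?_
  filter_upwards [hf.continuousAt.eventually (lt_mem_nhds hx)] with z hz
  exact (Real.rpow_def_of_pos hz p).symm

namespace ContinuousMultilinearMap

variable {𝕜 E G : Type*} [NontriviallyNormedField 𝕜] [NormedAddCommGroup E] [NormedSpace 𝕜 E]
  [NormedAddCommGroup G] [NormedSpace 𝕜 G] {k : ℕ}
  (f : ContinuousMultilinearMap 𝕜 (fun _ : Fin k => E) G)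

theorem norm_apply_diag_le (x : E) : ‖f fun _ => x‖ ≤ ‖f‖ * ‖x‖ ^ k := by
  simpa using f.le_opNorm fun _ => x

theorem apply_diag_smul (t : 𝕜) (x : E) : (f fun _ => t • x) = t ^ k • f fun _ => x := by
  simpa using f.map_smul_univ (fun _ => t) fun _ => x

theorem norm_apply_diag_sub_le (x y : E) :
    ‖(f fun _ => x) - f fun _ => y‖ ≤ ‖f‖ * k * max ‖x‖ ‖y‖ ^ (k - 1) * ‖x - y‖ := by
  refine (f.norm_image_sub_le _ _).trans ?_
  rw [Fintype.card_fin]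
  gcongr
  · exact pi_norm_const_le x
  · exact pi_norm_const_le y
  · exact pi_norm_const_le (x - y)

theorem analyticAt_apply_diag (x : E) : AnalyticAt 𝕜 (fun x => f fun _ => x) x :=
  f.analyticAt.comp
    ((ContinuousLinearMap.pi fun _ : Fin k => ContinuousLinearMap.id 𝕜 E).analyticAt x)

end ContinuousMultilinearMap

/-- `q ^ (1 / d)` itself is not analytic at `0`; the shift by `1` repairs this. -/
noncomputable def smoothRoot {X : Type*} (q : X → ℝ) (d : ℕ) (x : X) : ℝ :=
  (1 + q x) ^ (d : ℝ)⁻¹ - 1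

section

variable {X : Type*} [NormedAddCommGroup X]

structure SeparatingBounds (q : X → ℝ) (d : ℕ) (δ C L : ℝ) : Prop where
  degree_ne_zero : d ≠ 0
  lower_pos : 0 < δ
  upper_nonneg : 0 ≤ C
  lipschitz_nonneg : 0 ≤ L
  lower : ∀ x, δ * ‖x‖ ^ d ≤ q x
  upper : ∀ x, q x ≤ C * ‖x‖ ^ d
  abs_sub_le : ∀ x y, |q x - q y| ≤ L * max ‖x‖ ‖y‖ ^ (d - 1) * ‖x - y‖

namespace SeparatingBounds

variable {q : X → ℝ} {d : ℕ} {δ C L : ℝ}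

theorem nonneg (h : SeparatingBounds q d δ C L) (x : X) : 0 ≤ q x :=
  (mul_nonneg h.lower_pos.le (by positivity)).trans (h.lower x)

theorem map_zero (h : SeparatingBounds q d δ C L) : q 0 = 0 :=
  le_antisymm (by simpa [zero_pow h.degree_ne_zero] using h.upper 0) (h.nonneg 0)

theorem inv_degree_le_one (h : SeparatingBounds q d δ C L) : (d : ℝ)⁻¹ ≤ 1 :=
  inv_le_one_of_one_le₀ (by exact_mod_cast Nat.one_le_iff_ne_zero.2 h.degree_ne_zero)

theorem smoothRoot_nonneg (h : SeparatingBounds q d δ C L) (x : X) : 0 ≤ smoothRoot q d x :=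
  sub_nonneg.2 (Real.one_le_rpow (by linarith [h.nonneg x]) (by positivity))

theorem smoothRoot_zero (h : SeparatingBounds q d δ C L) : smoothRoot q d 0 = 0 := by
  simp [smoothRoot, h.map_zero]

theorem smoothRoot_mono (h : SeparatingBounds q d δ C L) {x y : X} (hxy : q x ≤ q y) :
    smoothRoot q d x ≤ smoothRoot q d y :=
  sub_le_sub_right (Real.rpow_le_rpow (by linarith [h.nonneg x]) (by linarith) (by positivity)) 1

theorem analyticAt_smoothRoot [NormedSpace ℝ X] (h : SeparatingBounds q d δ C L)
    (hq : ∀ x, AnalyticAt ℝ q x) (x : X) : AnalyticAt ℝ (smoothRoot q d) x :=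
  ((analyticAt_const.add (hq x)).rpow_const (add_pos_of_pos_of_nonneg one_pos (h.nonneg x)) _).sub
    analyticAt_const

theorem mul_norm_sub_one_le_smoothRoot (h : SeparatingBounds q d δ C L) (x : X) :
    δ ^ (d : ℝ)⁻¹ * ‖x‖ - 1 ≤ smoothRoot q d x := by
  rw [smoothRoot, ← mul_pow_rpow_inv_natCast h.lower_pos.le (norm_nonneg x) h.degree_ne_zero]
  gcongr
  · exact mul_nonneg h.lower_pos.le (by positivity)
  · linarith [h.lower x]

theorem smoothRoot_le (h : SeparatingBounds q d δ C L) (x : X) :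
    smoothRoot q d x ≤ C ^ (d : ℝ)⁻¹ * ‖x‖ := by
  rw [smoothRoot, sub_le_iff_le_add',
    ← mul_pow_rpow_inv_natCast h.upper_nonneg (norm_nonneg x) h.degree_ne_zero]
  calc (1 + q x) ^ (d : ℝ)⁻¹ ≤ 1 ^ (d : ℝ)⁻¹ + q x ^ (d : ℝ)⁻¹ :=
        Real.rpow_add_le_add_rpow zero_le_one (h.nonneg x) (by positivity) h.inv_degree_le_one
    _ ≤ 1 + (C * ‖x‖ ^ d) ^ (d : ℝ)⁻¹ := by
        rw [Real.one_rpow]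
        gcongr
        · exact h.nonneg x
        · exact h.upper x

theorem smoothRoot_sub_le (h : SeparatingBounds q d δ C L) {x y : X} (hxy : q y ≤ q x) :
    smoothRoot q d x - smoothRoot q d y ≤
      max (2 * C ^ (d : ℝ)⁻¹) ((d : ℝ)⁻¹ * δ ^ ((d : ℝ)⁻¹ - 1) * 2 ^ (d - 1) * L) * ‖x - y‖ := by
  set α : ℝ := (d : ℝ)⁻¹
  have hC := h.upper_nonneg
  have hδ := h.lower_pos
  have hL := h.lipschitz_nonneg
  rcases le_or_gt ‖x‖ (2 * ‖x - y‖) with hfar | hnear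
  · calc smoothRoot q d x - smoothRoot q d y ≤ C ^ α * ‖x‖ := by
          linarith [h.smoothRoot_le x, h.smoothRoot_nonneg y]
      _ ≤ 2 * C ^ α * ‖x - y‖ := by rw [mul_comm 2, mul_assoc]; gcongr
      _ ≤ _ := by gcongr; exact le_max_left _ _
  have hy : ‖x‖ < 2 * ‖y‖ := by linarith [norm_sub_norm_le x y]
  have hy0 : 0 < ‖y‖ := by linarith [norm_nonneg (x - y)]
  calc smoothRoot q d x - smoothRoot q d y = (1 + q x) ^ α - (1 + q y) ^ α :=
        sub_sub_sub_cancel_right _ _ _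
    _ ≤ α * (1 + q y) ^ (α - 1) * ((1 + q x) - (1 + q y)) :=
        rpow_sub_rpow_le_of_le_one (by linarith [h.nonneg x]) (by linarith [h.nonneg y])
          (by positivity) h.inv_degree_le_one
    _ ≤ α * (δ * ‖y‖ ^ d) ^ (α - 1) * (q x - q y) := by
        rw [add_sub_add_left_eq_sub]
        refine mul_le_mul_of_nonneg_right (mul_le_mul_of_nonneg_left ?_ (by positivity))
          (by linarith)
        exact Real.rpow_le_rpow_of_nonpos (by positivity) (by linarith [h.lower y])
          (by linarith [h.inv_degree_le_one])
    _ ≤ α * (δ * ‖y‖ ^ d) ^ (α - 1) * (L * (2 * ‖y‖) ^ (d - 1) * ‖x - y‖) := by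
        gcongr
        refine (le_abs_self _).trans ((h.abs_sub_le x y).trans ?_)
        gcongr
        exact max_le hy.le (by linarith)
    _ = α * δ ^ (α - 1) * 2 ^ (d - 1) * L * ((‖y‖ ^ d) ^ (α - 1) * ‖y‖ ^ (d - 1)) * ‖x - y‖ := by
        rw [Real.mul_rpow hδ.le (by positivity), mul_pow]
        ring
    _ ≤ _ := by
        rw [pow_rpow_inv_natCast_sub_one_mul_pow hy0 h.degree_ne_zero, mul_one]
        gcongr
        exact le_max_right _ _

theorem lipschitzWith_smoothRoot (h : SeparatingBounds q d δ C L) :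
    ∃ K : ℝ≥0, LipschitzWith K (smoothRoot q d) := by
  set K := max (2 * C ^ (d : ℝ)⁻¹) ((d : ℝ)⁻¹ * δ ^ ((d : ℝ)⁻¹ - 1) * 2 ^ (d - 1) * L)
  have hK : 0 ≤ K := le_max_of_le_left (by have := h.upper_nonneg; positivity)
  refine ⟨_, LipschitzWith.of_le_add_mul' K fun x y => ?_⟩
  rw [dist_eq_norm]
  rcases le_total (q x) (q y) with hxy | hxy
  · linarith [h.smoothRoot_mono hxy, mul_nonneg hK (norm_nonneg (x - y))]
  · linarith [h.smoothRoot_sub_le hxy]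

theorem exists_mul_norm_le_smoothRoot (h : SeparatingBounds q d δ C L) :
    ∃ M m : ℝ, 0 < M ∧ 0 < m ∧ ∀ x : X, M ≤ ‖x‖ → m * ‖x‖ ≤ smoothRoot q d x := by
  have hδ : 0 < δ ^ (d : ℝ)⁻¹ := Real.rpow_pos_of_pos h.lower_pos _
  refine ⟨2 / δ ^ (d : ℝ)⁻¹, δ ^ (d : ℝ)⁻¹ / 2, by positivity, by positivity, fun x hx => ?_⟩
  rw [div_le_iff₀' hδ] at hx
  linarith [h.mul_norm_sub_one_le_smoothRoot x]

end SeparatingBounds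

variable [NormedSpace ℝ X]

section EvenPowers

variable {k e : ℕ} (f : ContinuousMultilinearMap ℝ (fun _ : Fin k => X) ℝ)

theorem pow_apply_diag_le (he : Even e) (x : X) :
    (f fun _ => x) ^ e ≤ ‖f‖ ^ e * ‖x‖ ^ (k * e) := by
  rw [← he.pow_abs, pow_mul, ← mul_pow]
  exact pow_le_pow_left₀ (abs_nonneg _) (f.norm_apply_diag_le x) e

theorem pow_apply_diag_smul (t : ℝ) (x : X) :
    (f fun _ => t • x) ^ e = t ^ (k * e) * (f fun _ => x) ^ e := by
  rw [f.apply_diag_smul, smul_eq_mul, mul_pow, pow_mul]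

theorem abs_pow_apply_diag_sub_le (hk : 0 < k) (he : 0 < e) (x y : X) :
    |(f fun _ => x) ^ e - (f fun _ => y) ^ e| ≤
      e * k * ‖f‖ ^ e * max ‖x‖ ‖y‖ ^ (k * e - 1) * ‖x - y‖ := by
  set R := max ‖x‖ ‖y‖
  have hx : |f fun _ => x| ≤ ‖f‖ * R ^ k :=
    (f.norm_apply_diag_le x).trans (by gcongr; exact le_max_left _ _)
  have hy : |f fun _ => y| ≤ ‖f‖ * R ^ k :=
    (f.norm_apply_diag_le y).trans (by gcongr; exact le_max_right _ _)
  have hxy : |(f fun _ => x) - f fun _ => y| ≤ ‖f‖ * k * R ^ (k - 1) * ‖x - y‖ :=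
    f.norm_apply_diag_sub_le x y
  obtain ⟨k, rfl⟩ : ∃ k', k = k' + 1 := ⟨k - 1, by omega⟩
  obtain ⟨e, rfl⟩ : ∃ e', e = e' + 1 := ⟨e - 1, by omega⟩
  calc _ ≤ |(f fun _ => x) - f fun _ => y| * (e + 1 : ℕ) * max |f fun _ => x| |f fun _ => y| ^ e :=
        abs_pow_sub_pow_le _ _ _
    _ ≤ ‖f‖ * (k + 1 : ℕ) * R ^ k * ‖x - y‖ * (e + 1 : ℕ) * (‖f‖ * R ^ (k + 1)) ^ e := by
        gcongr
        · simpa using hxy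
        · exact max_le hx hy
    _ = _ := by
        rw [show (k + 1) * (e + 1) - 1 = k + (k + 1) * e by ring_nf; omega]
        push_cast
        ring

end EvenPowers

theorem mul_norm_pow_le_of_le_on_unit_sphere {q : X → ℝ} {d : ℕ} {δ : ℝ} (hd : d ≠ 0)
    (hhom : ∀ (t : ℝ) x, q (t • x) = t ^ d * q x) (hsph : ∀ u : X, ‖u‖ = 1 → δ ≤ q u) (x : X) :
    δ * ‖x‖ ^ d ≤ q x := by
  rcases eq_or_ne x 0 with rfl | hx
  · simpa [zero_pow hd] using (hhom 0 0).ge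
  calc δ * ‖x‖ ^ d ≤ ‖x‖ ^ d * q (‖x‖⁻¹ • x) := by
        rw [mul_comm]
        gcongr
        exact hsph _ (norm_smul_inv_norm hx)
    _ = q x := by rw [← hhom, smul_inv_smul₀ (norm_ne_zero_iff.mpr hx)]

open Finset in
theorem exists_analytic_separatingBounds {ι : Type*} [Fintype ι] {deg : ι → ℕ}
    (hdeg : ∀ i, 0 < deg i) (A : (i : ι) → ContinuousMultilinearMap ℝ (fun _ : Fin (deg i) => X) ℝ)
    {c : ℝ} (hc : 0 < c) (hA : ∀ u : X, ‖u‖ = 1 → c ≤ ∑ i, A i fun _ => u) :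
    ∃ (q : X → ℝ) (d : ℕ) (δ C L : ℝ), SeparatingBounds q d δ C L ∧ ∀ x, AnalyticAt ℝ q x := by
  set D := ∏ i, deg i
  have hD : D ≠ 0 := prod_ne_zero_iff.2 fun i _ => (hdeg i).ne'
  set e : ι → ℕ := fun i => 2 * (D / deg i)
  have he_even (i : ι) : Even (e i) := even_two_mul _
  have hdeg_mul (i : ι) : deg i * e i = 2 * D := by
    rw [mul_left_comm, Nat.mul_div_cancel' (dvd_prod_of_mem deg (mem_univ i))]
  have he (i : ι) : 0 < e i := Nat.pos_of_mul_pos_left (by rw [hdeg_mul i]; omega)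
  set q : X → ℝ := fun x => ∑ i, (A i fun _ => x) ^ e i
  have hhom (t : ℝ) (x : X) : q (t • x) = t ^ (2 * D) * q x := by
    simp only [q, mul_sum, pow_apply_diag_smul, hdeg_mul]
  have hsph (u : X) (hu : ‖u‖ = 1) : min (c / (Fintype.card ι + 1)) 1 ^ (2 * D) ≤ q u :=
    min_div_card_add_one_pow_le_sum_pow hc (hA u hu) he_even
      fun i => hdeg_mul i ▸ Nat.le_mul_of_pos_left _ (hdeg i)
  refine ⟨q, 2 * D, _, ∑ i, ‖A i‖ ^ e i, ∑ i, e i * deg i * ‖A i‖ ^ e i,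
    ⟨by omega, by positivity, by positivity, by positivity,
      mul_norm_pow_le_of_le_on_unit_sphere (by omega) hhom hsph, fun x => ?_, fun x y => ?_⟩,
    fun x => Finset.analyticAt_fun_sum _ fun i _ => ((A i).analyticAt_apply_diag x).pow _⟩
  · rw [sum_mul]
    refine sum_le_sum fun i _ => ?_
    simpa [hdeg_mul] using pow_apply_diag_le (A i) (he_even i) x
  · rw [sum_mul, sum_mul]
    refine (abs_sum_le_sum_abs _ _).trans_eq' (by rw [← sum_sub_distrib]) |>.trans ?_
    refine sum_le_sum fun i _ => ?_
    simpa [hdeg_mul] using abs_pow_apply_diag_sub_le (A i) (hdeg i) (he i) x y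

theorem HasSeparatingPoly.exists_homogeneous_forms (h : HasSeparatingPoly X) :
    ∃ (n : ℕ) (A : (i : Fin n) → ContinuousMultilinearMap ℝ (fun _ : Fin (i + 1) => X) ℝ) (c : ℝ),
      0 < c ∧ ∀ u : X, ‖u‖ = 1 → c ≤ ∑ i, A i fun _ => u := by
  obtain ⟨P, ⟨n, A, hPA⟩, hP0, c, hc, hP⟩ := h
  have hA0 (x : X) : (A 0 fun _ => x) = 0 := by
    have : Subsingleton (Fin ((0 : Fin (n + 1)) : ℕ) → X) := by rw [Fin.val_zero]; infer_instance
    rw [← hP0, hPA, Fin.sum_univ_succ, Subsingleton.elim (fun _ => x) fun _ => 0, left_eq_add]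
    exact Finset.sum_eq_zero fun i _ =>
      have : Nonempty (Fin (i.succ : ℕ)) := ⟨⟨0, i.succ_pos⟩⟩
      (A i.succ).map_zero
  refine ⟨n, fun i => A i.succ, c, hc, fun u hu => ?_⟩
  have := hP u hu
  rwa [hPA, Fin.sum_univ_succ, hA0, zero_add] at this

end

theorem stmt19_general (X : Type*) [NormedAddCommGroup X] [NormedSpace ℝ X]
    (hsep : HasSeparatingPoly X) :
    ∃ Q : X → ℝ, (∀ x, 0 ≤ Q x) ∧ (∃ K : ℝ≥0, LipschitzWith K Q) ∧
      (∀ x, AnalyticAt ℝ Q x) ∧ Q 0 = 0 ∧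
      ∃ M m : ℝ, 0 < M ∧ 0 < m ∧ ∀ x : X, M ≤ ‖x‖ → m * ‖x‖ ≤ Q x := by
  obtain ⟨n, A, c, hc, hA⟩ := hsep.exists_homogeneous_forms
  obtain ⟨q, d, δ, C, L, hq, hq_an⟩ :=
    exists_analytic_separatingBounds (fun i => i.succ_pos) A hc hA
  exact ⟨smoothRoot q d, hq.smoothRoot_nonneg, hq.lipschitzWith_smoothRoot,
    hq.analyticAt_smoothRoot hq_an, hq.smoothRoot_zero, hq.exists_mul_norm_le_smoothRoot⟩

/-- Every real Banach space with a separating polynomial admits a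
Lipschitz, real analytic separating function: a function `Q : X → [0,∞)`, Lipschitz on all
of `X`, real analytic, with `Q 0 = 0` and `Q x ≥ m‖x‖` whenever `‖x‖ ≥ M`, for some
`M, m > 0`. -/
theorem stmt19 (X : Type*) [NormedAddCommGroup X] [NormedSpace ℝ X] [CompleteSpace X]
    (hsep : HasSeparatingPoly X) :
    ∃ Q : X → ℝ, (∀ x, 0 ≤ Q x) ∧ (∃ K : ℝ≥0, LipschitzWith K Q) ∧
      (∀ x, AnalyticAt ℝ Q x) ∧ Q 0 = 0 ∧
      ∃ M m : ℝ, 0 < M ∧ 0 < m ∧ ∀ x : X, M ≤ ‖x‖ → m * ‖x‖ ≤ Q x :=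
  stmt19_general X hsep
end
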